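/- Let a soft-attention transformer be given. There is a constant K, depending only on the transformer's parameters (the number of layers L, the number of heads H, the embedding norm bounds, the norms of the attention parameter matrices, and the Lipschitz constants of the feedforward networks) but not on the input length n, such that for all n ≥ 2 and all inputs x, x' ∈ 𝒱ⁿ that differ in exactly one position i with i < n, the final activations satisfy ‖y_n^{(L)}(x) − y_n^{(L)}(x')‖ ≤ K/n. -/

import Mathlib

/-!
Two inductions over the layers. First, activations are bounded independently of `n`: head
values are convex combinations of activations and the layer maps are Lipschitz. Hence all
attention scores are bounded by some `C`, and the softmax normaliser `∑ exp aₘ` is at least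
`n e^{-C}`. Second, at every position other than `i` the activations on `x` and `x'` differ by
`O(1/n)`: then so do the scores at positions `≠ i`, and the numerator and normaliser of each
softmax average change by `n · O(1/n)` from those positions plus `O(1)` from position `i`.
Dividing by the normaliser gives `O(1/n)` again.
-/

open scoped BigOperators

/-- Softmax weights: `softmaxW a j = exp (a j) / ∑ j', exp (a j')`. -/
noncomputable def softmaxW {n : ℕ} (a : Fin n → ℝ) (j : Fin n) : ℝ :=
  Real.exp (a j) / ∑ j' : Fin n, Real.exp (a j')

/-- A soft-attention transformer over alphabet `V` with activations in `ℝ^d`: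
`L` layers, `H` heads per layer, uniformly norm-bounded input embeddings `emb` and
positional embeddings `pos` (bound `B`), a Lipschitz map `f0` combining them into the
layer-0 activations, per-layer-and-head query/key parameter matrices `Q, K` for
(scaled) dot-product attention scores, and Lipschitz-continuous (ReLU feedforward,
with skip connection) activation maps `fact k` computing the layer-`(k+1)` activation
from the layer-`k` activation and the `H` head values. -/
structure SoftTransformer (V : Type) (d : ℕ) where
  L : ℕ
  H : ℕ
  emb : V → (Fin d → ℝ)
  pos : ℕ → (Fin d → ℝ)
  B : ℝ
  emb_bound : ∀ a : V, ‖emb a‖ ≤ B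
  pos_bound : ∀ i : ℕ, ‖pos i‖ ≤ B
  f0 : (Fin d → ℝ) × (Fin d → ℝ) → (Fin d → ℝ)
  K0 : NNReal
  f0_lip : LipschitzWith K0 f0
  Q : ℕ → Fin H → Matrix (Fin d) (Fin d) ℝ
  K : ℕ → Fin H → Matrix (Fin d) (Fin d) ℝ
  fact : (k : ℕ) → (Fin d → ℝ) × (Fin H → Fin d → ℝ) → (Fin d → ℝ)
  Kact : ℕ → NNReal
  fact_lip : ∀ k : ℕ, LipschitzWith (Kact k) (fact k)

/-- Activations of a soft-attention transformer on input `x` of length `n`: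
`act x k i` is `y_i^{(k)}`.  The head value `b_{i,k+1,h}` is the softmax-weighted
average `∑ j â_{i,j} y_j^{(k)}` with dot-product attention scores
`(Q y_i^{(k)}) ⬝ᵥ (K y_j^{(k)})`. -/
noncomputable def SoftTransformer.act {V : Type} {d : ℕ} (T : SoftTransformer V d)
    {n : ℕ} (x : Fin n → V) : ℕ → Fin n → (Fin d → ℝ)
  | 0, i => T.f0 (T.emb (x i), T.pos (i.val + 1))
  | k + 1, i =>
      T.fact k (T.act x k i,
        fun h => ∑ j : Fin n,
          softmaxW (fun j' : Fin n =>
              dotProduct (Matrix.mulVec (T.Q k h) (T.act x k i))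
                (Matrix.mulVec (T.K k h) (T.act x k j'))) j • T.act x k j)

open Finset Real Matrix

theorem abs_exp_sub_exp_le_exp_mul {C s t : ℝ} (hs : s ≤ C) (ht : t ≤ C) :
    |exp s - exp t| ≤ exp C * |s - t| := by
  wlog hts : t ≤ s generalizing s t
  · rw [abs_sub_comm, abs_sub_comm s]
    exact this ht hs (le_of_not_ge hts)
  rw [abs_of_nonneg (sub_nonneg.2 (exp_le_exp.2 hts)), abs_of_nonneg (sub_nonneg.2 hts)]
  have h1 : 1 - exp (t - s) ≤ s - t := by
    linarith [neg_sub s t ▸ one_sub_le_exp_neg (s - t)]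
  calc exp s - exp t = exp s * (1 - exp (t - s)) := by rw [exp_sub]; field_simp
    _ ≤ exp C * (s - t) := mul_le_mul (exp_le_exp.2 hs) h1
        (sub_nonneg.2 (exp_le_one_iff.2 (sub_nonpos.2 hts))) (exp_pos C).le

theorem norm_exp_smul_sub_exp_smul_le {E : Type*} [SeminormedAddCommGroup E] [NormedSpace ℝ E]
    {C s t : ℝ} (hs : s ≤ C) (ht : t ≤ C) (v w : E) :
    ‖exp s • v - exp t • w‖ ≤ exp C * (|s - t| * ‖v‖ + ‖v - w‖) := by
  have hsplit : exp s • v - exp t • w = (exp s - exp t) • v + exp t • (v - w) := by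
    rw [sub_smul, smul_sub]
    abel
  rw [hsplit, mul_add, ← mul_assoc]
  refine (norm_add_le _ _).trans ?_
  rw [norm_smul, norm_smul, Real.norm_eq_abs, Real.norm_of_nonneg (exp_pos t).le]
  gcongr
  exact abs_exp_sub_exp_le_exp_mul hs ht

theorem norm_sum_sub_sum_le_of_ne {ι E : Type*} [Fintype ι] [SeminormedAddCommGroup E]
    {f g : ι → E} (i : ι) {A η : ℝ} (hη : 0 ≤ η) (hf : ∀ m, ‖f m‖ ≤ A) (hg : ∀ m, ‖g m‖ ≤ A)
    (hfg : ∀ m ≠ i, ‖f m - g m‖ ≤ η) :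
    ‖∑ m, f m - ∑ m, g m‖ ≤ Fintype.card ι * η + 2 * A := by
  classical
  rw [← sum_sub_distrib, ← add_sum_erase _ _ (mem_univ i)]
  calc ‖f i - g i + ∑ m ∈ univ.erase i, (f m - g m)‖
      ≤ ‖f i - g i‖ + ∑ m ∈ univ.erase i, ‖f m - g m‖ :=
        (norm_add_le _ _).trans (add_le_add_right (norm_sum_le _ _) _)
    _ ≤ (A + A) + ∑ _m ∈ univ.erase i, η :=
        add_le_add (norm_sub_le_of_le (hf i) (hg i))
          (sum_le_sum fun m hm => hfg m (ne_of_mem_erase hm))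
    _ ≤ (A + A) + ∑ _m : ι, η :=
        add_le_add_right (sum_le_sum_of_subset_of_nonneg (subset_univ _) fun _ _ _ => hη) _
    _ = Fintype.card ι * η + 2 * A := by rw [sum_const, nsmul_eq_mul, card_univ]; ring

theorem norm_inv_smul_sub_inv_smul_le {E : Type*} [SeminormedAddCommGroup E] [NormedSpace ℝ E]
    {Z Z' : ℝ} (hZ : 0 < Z) (hZ' : 0 < Z') (N N' : E) :
    ‖Z⁻¹ • N - Z'⁻¹ • N'‖ ≤ (‖N - N'‖ + ‖Z'⁻¹ • N'‖ * |Z - Z'|) / Z := by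
  have hsplit : Z⁻¹ • N - Z'⁻¹ • N' = Z⁻¹ • (N - N') + (Z⁻¹ * (Z' - Z)) • (Z'⁻¹ • N') := by
    have hcoeff : Z⁻¹ * (Z' - Z) * Z'⁻¹ = Z⁻¹ - Z'⁻¹ := by field_simp
    rw [smul_smul, hcoeff, smul_sub, sub_smul]
    abel
  rw [hsplit, add_div, div_eq_inv_mul, div_eq_inv_mul, abs_sub_comm]
  refine (norm_add_le _ _).trans (add_le_add ?_ ?_)
  · rw [norm_smul, norm_inv, Real.norm_of_nonneg hZ.le]
  · rw [norm_smul, norm_mul, norm_inv, Real.norm_of_nonneg hZ.le, Real.norm_eq_abs]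
    exact le_of_eq (by ring)

theorem softmaxW_nonneg {n : ℕ} (a : Fin n → ℝ) (j : Fin n) : 0 ≤ softmaxW a j := by
  unfold softmaxW
  positivity

theorem sum_softmaxW {n : ℕ} (hn : 0 < n) (a : Fin n → ℝ) : ∑ j, softmaxW a j = 1 := by
  have : 0 < ∑ j : Fin n, exp (a j) :=
    sum_pos (fun j _ => exp_pos (a j)) (univ_nonempty_iff.2 ⟨⟨0, hn⟩⟩)
  simp only [softmaxW, ← sum_div, div_self this.ne']

theorem sum_softmaxW_smul {E : Type*} [AddCommGroup E] [Module ℝ E] {n : ℕ} (a : Fin n → ℝ)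
    (y : Fin n → E) :
    ∑ j, softmaxW a j • y j = (∑ j, exp (a j))⁻¹ • ∑ j, exp (a j) • y j := by
  simp only [softmaxW, smul_sum, smul_smul, div_eq_inv_mul]

theorem norm_sum_softmaxW_smul_le {E : Type*} [SeminormedAddCommGroup E] [NormedSpace ℝ E]
    {n : ℕ} (hn : 0 < n) (a : Fin n → ℝ) {y : Fin n → E} {M : ℝ} (hy : ∀ j, ‖y j‖ ≤ M) :
    ‖∑ j, softmaxW a j • y j‖ ≤ M :=
  mem_closedBall_zero_iff.1 <| (convex_closedBall 0 M).sum_mem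
    (fun j _ => softmaxW_nonneg a j) (sum_softmaxW hn a)
    (fun j _ => mem_closedBall_zero_iff.2 (hy j))

theorem norm_sum_softmaxW_smul_sub_le {E : Type*} [SeminormedAddCommGroup E] [NormedSpace ℝ E]
    {n : ℕ} {a a' : Fin n → ℝ} {y y' : Fin n → E} (i : Fin n) {C M ε δ : ℝ}
    (hε : 0 ≤ ε) (hδ : 0 ≤ δ) (ha : ∀ m, |a m| ≤ C) (ha' : ∀ m, |a' m| ≤ C)
    (hy : ∀ m, ‖y m‖ ≤ M) (hy' : ∀ m, ‖y' m‖ ≤ M)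
    (haa' : ∀ m ≠ i, |a m - a' m| ≤ ε) (hyy' : ∀ m ≠ i, ‖y m - y' m‖ ≤ δ) :
    ‖∑ m, softmaxW a m • y m - ∑ m, softmaxW a' m • y' m‖ ≤
      exp (2 * C) * (2 * ε * M + δ + 4 * M / n) := by
  have hn : (0 : ℝ) < n := Nat.cast_pos.2 i.pos
  have hM : 0 ≤ M := (norm_nonneg _).trans (hy i)
  have haC : ∀ m, a m ≤ C := fun m => le_of_abs_le (ha m)
  have ha'C : ∀ m, a' m ≤ C := fun m => le_of_abs_le (ha' m)
  have hterm : ∀ (b : Fin n → ℝ) (z : Fin n → E), (∀ m, b m ≤ C) → (∀ m, ‖z m‖ ≤ M) →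
      ∀ m, ‖exp (b m) • z m‖ ≤ exp C * M := fun b z hb hz m => by
    rw [norm_smul, Real.norm_of_nonneg (exp_pos _).le]
    gcongr
    exacts [hb m, hz m]
  set Z := ∑ m, exp (a m)
  set Z' := ∑ m, exp (a' m)
  have hZ : n * exp (-C) ≤ Z :=
    calc n * exp (-C) = ∑ _m : Fin n, exp (-C) := by simp
      _ ≤ Z := sum_le_sum fun m _ => exp_le_exp.2 (neg_le_of_abs_le (ha m))
  have hZ' : 0 < Z' := sum_pos (fun m _ => exp_pos (a' m)) ⟨i, mem_univ i⟩
  have hZZ' : |Z - Z'| ≤ n * (exp C * ε) + 2 * exp C := by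
    simpa using norm_sum_sub_sum_le_of_ne (f := fun m => exp (a m)) (g := fun m => exp (a' m))
      i (by positivity) (fun m => by simpa using haC m) (fun m => by simpa using ha'C m)
      fun m hm => (abs_exp_sub_exp_le_exp_mul (haC m) (ha'C m)).trans (by gcongr; exact haa' m hm)
  have hNN' : ‖∑ m, exp (a m) • y m - ∑ m, exp (a' m) • y' m‖ ≤
      n * (exp C * (ε * M + δ)) + 2 * (exp C * M) := by
    simpa using norm_sum_sub_sum_le_of_ne i (by positivity) (hterm a y haC hy)
      (hterm a' y' ha'C hy') fun m hm =>
        (norm_exp_smul_sub_exp_smul_le (haC m) (ha'C m) _ _).trans <| by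
          gcongr
          exacts [haa' m hm, hy m, hyy' m hm]
  have hout : ‖Z'⁻¹ • ∑ m, exp (a' m) • y' m‖ ≤ M := by
    rw [← sum_softmaxW_smul]
    exact norm_sum_softmaxW_smul_le i.pos a' hy'
  rw [sum_softmaxW_smul, sum_softmaxW_smul]
  calc _ ≤ (‖∑ m, exp (a m) • y m - ∑ m, exp (a' m) • y' m‖
          + ‖Z'⁻¹ • ∑ m, exp (a' m) • y' m‖ * |Z - Z'|) / Z :=
        norm_inv_smul_sub_inv_smul_le ((by positivity : (0 : ℝ) < n * exp (-C)).trans_le hZ) hZ'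
          _ _
    _ ≤ (n * (exp C * (ε * M + δ)) + 2 * (exp C * M) + M * (n * (exp C * ε) + 2 * exp C))
          / (n * exp (-C)) := by
        gcongr
    _ = exp (2 * C) * (2 * ε * M + δ + 4 * M / n) := by
        rw [Real.exp_neg, show 2 * C = C + C by ring, exp_add]
        field_simp
        ring

theorem LipschitzWith.norm_le_add_of_norm_le {E F : Type*} [SeminormedAddCommGroup E]
    [SeminormedAddCommGroup F] {K : NNReal} {f : E → F} (hf : LipschitzWith K f) {p : E} {r : ℝ}
    (hp : ‖p‖ ≤ r) : ‖f p‖ ≤ ‖f 0‖ + K * r :=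
  (norm_le_norm_add_norm_sub' _ _).trans (add_le_add_right (hf.norm_sub_le_of_le (by simpa)) _)

section Attention

variable {l m : Type*} [Fintype l] [Fintype m]

def attnScore (Q K : Matrix m l ℝ) (u v : l → ℝ) : ℝ := Q *ᵥ u ⬝ᵥ K *ᵥ v

noncomputable def attnHead {n : ℕ} (Q K : Matrix m l ℝ) (y : Fin n → l → ℝ) (u : l → ℝ) : l → ℝ :=
  ∑ j, softmaxW (fun j' => attnScore Q K u (y j')) j • y j

theorem abs_dotProduct_le (u w : m → ℝ) : |u ⬝ᵥ w| ≤ Fintype.card m * (‖u‖ * ‖w‖) :=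
  calc |u ⬝ᵥ w| ≤ ∑ r, ‖u r‖ * ‖w r‖ := (abs_sum_le_sum_abs _ _).trans_eq (by simp [abs_mul])
    _ ≤ ∑ _r : m, ‖u‖ * ‖w‖ := sum_le_sum fun r _ =>
        mul_le_mul (norm_le_pi_norm u r) (norm_le_pi_norm w r) (norm_nonneg _) (norm_nonneg _)
    _ = Fintype.card m * (‖u‖ * ‖w‖) := by simp

theorem attnScore_sub_attnScore (Q K : Matrix m l ℝ) (u u' v v' : l → ℝ) :
    attnScore Q K u v - attnScore Q K u' v' =
      attnScore Q K (u - u') v + attnScore Q K u' (v - v') := by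
  simp only [attnScore, mulVec_sub, sub_dotProduct, dotProduct_sub]
  ring

attribute [local instance] Matrix.linftyOpNormedAddCommGroup in
theorem exists_abs_attnScore_le {ι : Type*} [Fintype ι] (Q K : ι → Matrix m l ℝ) :
    ∃ c, 0 ≤ c ∧ ∀ h u v, |attnScore (Q h) (K h) u v| ≤ c * (‖u‖ * ‖v‖) := by
  refine ⟨∑ h, Fintype.card m * (‖Q h‖ * ‖K h‖), by positivity, fun h u v => ?_⟩
  calc |attnScore (Q h) (K h) u v| ≤ Fintype.card m * (‖Q h *ᵥ u‖ * ‖K h *ᵥ v‖) :=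
        abs_dotProduct_le _ _
    _ ≤ Fintype.card m * ((‖Q h‖ * ‖u‖) * (‖K h‖ * ‖v‖)) := by
        gcongr <;> exact linfty_opNorm_mulVec _ _
    _ = Fintype.card m * (‖Q h‖ * ‖K h‖) * (‖u‖ * ‖v‖) := by ring
    _ ≤ (∑ h, Fintype.card m * (‖Q h‖ * ‖K h‖)) * (‖u‖ * ‖v‖) := by
        gcongr
        exact single_le_sum (f := fun h => Fintype.card m * (‖Q h‖ * ‖K h‖))
          (fun _ _ => by positivity) (mem_univ h)

variable {n : ℕ} {Q K : Matrix m l ℝ}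

theorem norm_attnHead_le (hn : 0 < n) {y : Fin n → l → ℝ} {M : ℝ} (hy : ∀ j, ‖y j‖ ≤ M)
    (u : l → ℝ) : ‖attnHead Q K y u‖ ≤ M :=
  norm_sum_softmaxW_smul_le hn _ hy

theorem norm_attnHead_sub_attnHead_le {y y' : Fin n → l → ℝ} {u u' : l → ℝ} (i : Fin n)
    {c M δ : ℝ} (hc0 : 0 ≤ c) (hc : ∀ u v, |attnScore Q K u v| ≤ c * (‖u‖ * ‖v‖)) (hδ : 0 ≤ δ)
    (hy : ∀ j, ‖y j‖ ≤ M) (hy' : ∀ j, ‖y' j‖ ≤ M) (hu : ‖u‖ ≤ M) (hu' : ‖u'‖ ≤ M)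
    (huu' : ‖u - u'‖ ≤ δ) (hyy' : ∀ j ≠ i, ‖y j - y' j‖ ≤ δ) :
    ‖attnHead Q K y u - attnHead Q K y' u'‖ ≤
      exp (2 * c * M ^ 2) * ((4 * c * M ^ 2 + 1) * δ + 4 * M / n) := by
  have hM : 0 ≤ M := (norm_nonneg _).trans hu
  have hscore : ∀ {v w : l → ℝ}, ‖v‖ ≤ M → ‖w‖ ≤ M → |attnScore Q K v w| ≤ c * M ^ 2 :=
    fun hv hw => (hc _ _).trans <| by
      rw [sq]; exact mul_le_mul_of_nonneg_left (mul_le_mul hv hw (norm_nonneg _) hM) hc0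
  have hscore_sub : ∀ j ≠ i, |attnScore Q K u (y j) - attnScore Q K u' (y' j)| ≤
      2 * c * M * δ := fun j hj => by
    rw [attnScore_sub_attnScore]
    refine (abs_add_le _ _).trans ((add_le_add (hc _ _) (hc _ _)).trans ?_)
    have h1 := mul_le_mul huu' (hy j) (norm_nonneg _) hδ
    have h2 := mul_le_mul hu' (hyy' j hj) (norm_nonneg _) hM
    nlinarith
  refine (norm_sum_softmaxW_smul_sub_le i (by positivity) hδ (fun j => hscore hu (hy j))
    (fun j => hscore hu' (hy' j)) hy hy' hscore_sub hyy').trans_eq ?_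
  rw [← mul_assoc 2 c]
  ring

end Attention

namespace SoftTransformer

variable {V : Type} {d : ℕ} (T : SoftTransformer V d)

theorem act_succ {n : ℕ} (x : Fin n → V) (k : ℕ) (j : Fin n) :
    T.act x (k + 1) j = T.fact k (T.act x k j,
      fun h => attnHead (T.Q k h) (T.K k h) (T.act x k) (T.act x k j)) :=
  rfl

theorem exists_norm_act_le (k : ℕ) :
    ∃ M, 0 ≤ M ∧ ∀ n (x : Fin n → V) j, ‖T.act x k j‖ ≤ M := by
  induction k with
  | zero =>
    refine ⟨‖T.f0 0‖ + T.K0 * |T.B|, by positivity, fun n x j =>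
      T.f0_lip.norm_le_add_of_norm_le ?_⟩
    exact norm_prod_le_iff.2 ⟨(T.emb_bound _).trans (le_abs_self _),
      (T.pos_bound _).trans (le_abs_self _)⟩
  | succ k ih =>
    obtain ⟨M, hM0, hM⟩ := ih
    refine ⟨‖T.fact k 0‖ + T.Kact k * M, by positivity, fun n x j => ?_⟩
    rw [act_succ]
    refine (T.fact_lip k).norm_le_add_of_norm_le (norm_prod_le_iff.2 ⟨hM n x j, ?_⟩)
    exact (pi_norm_le_iff_of_nonneg hM0).2 fun h =>
      norm_attnHead_le j.pos (hM n x) _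

theorem exists_norm_act_sub_act_le (k : ℕ) :
    ∃ E, 0 ≤ E ∧ ∀ n (x x' : Fin n → V) (i : Fin n), (∀ j ≠ i, x j = x' j) →
      ∀ j ≠ i, ‖T.act x k j - T.act x' k j‖ ≤ E / n := by
  induction k with
  | zero =>
    refine ⟨0, le_rfl, fun n x x' i hx j hj => ?_⟩
    simp [act, hx j hj]
  | succ k ih =>
    obtain ⟨E, hE, ih⟩ := ih
    obtain ⟨M, hM0, hM⟩ := T.exists_norm_act_le k
    obtain ⟨c, hc0, hc⟩ := exists_abs_attnScore_le (T.Q k) (T.K k)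
    set G := exp (2 * c * M ^ 2) * ((4 * c * M ^ 2 + 1) * E + 4 * M)
    have hG : 0 ≤ G := by positivity
    refine ⟨T.Kact k * (E + G), by positivity, fun n x x' i hx j hj => ?_⟩
    have hn : (0 : ℝ) < n := Nat.cast_pos.2 j.pos
    have hhead : ∀ h, ‖attnHead (T.Q k h) (T.K k h) (T.act x k) (T.act x k j) -
        attnHead (T.Q k h) (T.K k h) (T.act x' k) (T.act x' k j)‖ ≤ G / n := fun h =>
      (norm_attnHead_sub_attnHead_le i hc0 (hc h) (by positivity) (hM n x) (hM n x')
        (hM n x j) (hM n x' j) (ih n x x' i hx j hj) (ih n x x' i hx)).trans_eq (by ring)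
    rw [act_succ, act_succ, mul_div_assoc]
    refine (T.fact_lip k).norm_sub_le_of_le (norm_prod_le_iff.2 ⟨?_, ?_⟩)
    · exact (ih n x x' i hx j hj).trans (by gcongr; linarith)
    · exact (pi_norm_le_iff_of_nonneg (by positivity)).2 fun h =>
        (hhead h).trans (by gcongr; linarith)

end SoftTransformer

/-- **Single-symbol influence is `O(1/n)` for soft attention.**  For every
soft-attention transformer there is a constant `K`, depending only on the transformer
(its layers, heads, embedding bounds, parameter matrices, and Lipschitz constants) but
not on the input length, such that for all `n ≥ 2` and all inputs `x, x'` of length `n`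
differing in exactly one position `i` that is not the last position, the final
activations `y_n^{(L)}` differ in norm by at most `K / n`. -/
theorem soft_attention_single_symbol_influence {V : Type} {d : ℕ}
    (T : SoftTransformer V d) :
    ∃ K : ℝ, ∀ (n : ℕ), 2 ≤ n → ∀ (hn : 0 < n) (x x' : Fin n → V) (i : Fin n),
      i.val + 1 < n → x i ≠ x' i → (∀ j : Fin n, j ≠ i → x j = x' j) →
      ‖T.act x T.L ⟨n - 1, Nat.sub_lt hn one_pos⟩ -
          T.act x' T.L ⟨n - 1, Nat.sub_lt hn one_pos⟩‖ ≤ K / n := by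
  obtain ⟨E, -, hE⟩ := T.exists_norm_act_sub_act_le T.L
  refine ⟨E, fun n _ hn x x' i hi _ hx => hE n x x' i hx _ ?_⟩
  rw [ne_eq, Fin.ext_iff, Fin.val_mk]
  omega
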